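/- arXiv:2206.05958 — 5 statements merged into one kernel-verified Lean document; each statement's English description precedes it below -/
import Mathlib

section
/- Let D be the linear map on m×m real matrices given by D(X) = ρ·X − X·ρ. Then D⁵ + 5·D³ + 4·D = 0, i.e. for every m×m real matrix X one has D(D(D(D(D(X))))) + 5·D(D(D(X))) + 4·D(X) = 0. -/
/-!
Since `J² = -1`, the matrix `ρ` satisfies `ρ³ = -ρ`. The derivation `D = ad ρ` is the difference
`L - R` of the commuting operators of left and right multiplication by `ρ`, both annihilated by
`t³ + t`; hence `D` is annihilated by `t (t² + 1) (t² + 4) = t⁵ + 5t³ + 4t`, whose roots `0, ±i, ±2i`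
are the differences of the roots `0, ±i` of `t³ + t`. Concretely, expanding the iterated
commutators writes `D⁵ + 5D³ + 4D` as a combination of products that each contain `ρ³ + ρ`.
-/

open Matrix

/-- The standard complex structure matrix `J = [[0, -Id_n],[Id_n, 0]]`. -/
noncomputable def Jmat (n : ℕ) : Matrix (Fin n ⊕ Fin n) (Fin n ⊕ Fin n) ℝ :=
  Matrix.fromBlocks 0 (-1) 1 0

/-- The matrix `ρ = [[0,0],[0,J]]` with block sizes `k` and `2n`. -/
noncomputable def rhoMat (k n : ℕ) :
    Matrix (Fin k ⊕ (Fin n ⊕ Fin n)) (Fin k ⊕ (Fin n ⊕ Fin n)) ℝ :=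
  Matrix.fromBlocks 0 0 0 (Jmat n)

/-- The derivation `D = ad ρ : X ↦ ρ·X − X·ρ`. -/
noncomputable def adRho (k n : ℕ) :
    Matrix (Fin k ⊕ (Fin n ⊕ Fin n)) (Fin k ⊕ (Fin n ⊕ Fin n)) ℝ →
      Matrix (Fin k ⊕ (Fin n ⊕ Fin n)) (Fin k ⊕ (Fin n ⊕ Fin n)) ℝ :=
  fun X => rhoMat k n * X - X * rhoMat k n

section Ring

variable {A : Type*} [Ring A]

theorem lie_quintic_eq (r X : A) :
    ⁅r, ⁅r, ⁅r, ⁅r, ⁅r, X⁆⁆⁆⁆⁆ + 5 * ⁅r, ⁅r, ⁅r, X⁆⁆⁆ + 4 * ⁅r, X⁆ =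
      (r ^ 2 + 4) * (r ^ 3 + r) * X - X * (r ^ 3 + r) * (r ^ 2 + 4)
        - 5 * (r * (r ^ 3 + r) * X * r) + 5 * (r * X * (r ^ 3 + r) * r)
        + 10 * ((r ^ 3 + r) * X * r ^ 2) - 10 * (r ^ 2 * X * (r ^ 3 + r)) := by
  simp only [Ring.lie_def]
  noncomm_ring

theorem lie_quintic_of_pow_three_eq_neg {r : A} (h : r ^ 3 = -r) (X : A) :
    ⁅r, ⁅r, ⁅r, ⁅r, ⁅r, X⁆⁆⁆⁆⁆ + 5 * ⁅r, ⁅r, ⁅r, X⁆⁆⁆ + 4 * ⁅r, X⁆ = 0 := by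
  simp [lie_quintic_eq, h]

end Ring

theorem Jmat_mul_self (n : ℕ) : Jmat n * Jmat n = -1 := by
  simp [Jmat, fromBlocks_multiply, ← fromBlocks_one, fromBlocks_neg]

theorem rhoMat_pow_three (k n : ℕ) : rhoMat k n ^ 3 = -rhoMat k n := by
  simp [rhoMat, pow_succ, fromBlocks_multiply, fromBlocks_neg, Jmat_mul_self]

theorem adRho_eq_lie (k n : ℕ)
    (X : Matrix (Fin k ⊕ (Fin n ⊕ Fin n)) (Fin k ⊕ (Fin n ⊕ Fin n)) ℝ) :
    adRho k n X = ⁅rhoMat k n, X⁆ :=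
  (Ring.lie_def _ _).symm

theorem adRho_quintic_general (k n : ℕ)
    (X : Matrix (Fin k ⊕ (Fin n ⊕ Fin n)) (Fin k ⊕ (Fin n ⊕ Fin n)) ℝ) :
    adRho k n (adRho k n (adRho k n (adRho k n (adRho k n X)))) +
      (5 : ℝ) • adRho k n (adRho k n (adRho k n X)) + (4 : ℝ) • adRho k n X = 0 := by
  simp only [adRho_eq_lie, ofNat_smul_eq_nsmul, nsmul_eq_mul, Nat.cast_ofNat]
  exact lie_quintic_of_pow_three_eq_neg (rhoMat_pow_three k n) X

theorem adRho_quintic (k n : ℕ) (hk : 0 < k) (hn : 0 < n)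
    (X : Matrix (Fin k ⊕ (Fin n ⊕ Fin n)) (Fin k ⊕ (Fin n ⊕ Fin n)) ℝ) :
    adRho k n (adRho k n (adRho k n (adRho k n (adRho k n X)))) +
      (5 : ℝ) • adRho k n (adRho k n (adRho k n X)) + (4 : ℝ) • adRho k n X = 0 :=
  adRho_quintic_general k n X
end

section
/- Let 𝔤 be a Lie subalgebra (over ℝ) of the m×m real matrices. Let 𝔭 := {X ∈ 𝔤 : X = [[0, B],[B', 0]] for some B, B'} and 𝔮 := {X ∈ 𝔤 : X = [[0,0],[0,C]] with C·J + J·C = 0}. If there exist finitely many elements [[0,0],[0,C̃₁]], …, [[0,0],[0,C̃_r]] of 𝔮 such that C̃₁² + ⋯ + C̃_r² = Id_{2n}, then the ℝ-linear span of {⁅X, Y⁆ : X ∈ 𝔮, Y ∈ 𝔭} equals 𝔭 (where ⁅X,Y⁆ = X·Y − Y·X). -/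
open Matrix

attribute [local instance 100] LieRing.ofAssociativeRing

/-- `𝔭` : the elements of `𝔤` of the form `[[0,B],[B',0]]`. -/
def pSet (k n : ℕ)
    (L : LieSubalgebra ℝ (Matrix (Fin k ⊕ (Fin n ⊕ Fin n)) (Fin k ⊕ (Fin n ⊕ Fin n)) ℝ)) :
    Set (Matrix (Fin k ⊕ (Fin n ⊕ Fin n)) (Fin k ⊕ (Fin n ⊕ Fin n)) ℝ) :=
  {X | X ∈ L ∧ ∃ (B : Matrix (Fin k) (Fin n ⊕ Fin n) ℝ)
    (B' : Matrix (Fin n ⊕ Fin n) (Fin k) ℝ), X = Matrix.fromBlocks 0 B B' 0}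

/-- `𝔮 = 𝔤₋₁^σ` : the elements of `𝔤` of the form `[[0,0],[0,C]]` with `CJ + JC = 0`. -/
def qSet (k n : ℕ)
    (L : LieSubalgebra ℝ (Matrix (Fin k ⊕ (Fin n ⊕ Fin n)) (Fin k ⊕ (Fin n ⊕ Fin n)) ℝ)) :
    Set (Matrix (Fin k ⊕ (Fin n ⊕ Fin n)) (Fin k ⊕ (Fin n ⊕ Fin n)) ℝ) :=
  {X | X ∈ L ∧ ∃ C : Matrix (Fin n ⊕ Fin n) (Fin n ⊕ Fin n) ℝ,
    C * Jmat n + Jmat n * C = 0 ∧ X = Matrix.fromBlocks 0 0 0 C}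
lemma aux_lie_mem_p (k n : ℕ)
    (L : LieSubalgebra ℝ (Matrix (Fin k ⊕ (Fin n ⊕ Fin n)) (Fin k ⊕ (Fin n ⊕ Fin n)) ℝ))
    {X Y : Matrix (Fin k ⊕ (Fin n ⊕ Fin n)) (Fin k ⊕ (Fin n ⊕ Fin n)) ℝ}
    (hX : X ∈ qSet k n L) (hY : Y ∈ pSet k n L) :
    X * Y - Y * X ∈ pSet k n L := by
  obtain ⟨hXL, C, -, rfl⟩ := hX
  obtain ⟨hYL, B, B', rfl⟩ := hY
  refine ⟨?_, -(B * C), C * B', ?_⟩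
  · have := L.lie_mem hXL hYL
    rwa [Ring.lie_def] at this
  · ext (i | i) (j | j) <;>
      simp [Matrix.fromBlocks_multiply, Matrix.sub_apply]

lemma sum_fromBlocks_p (k n : ℕ) {r : ℕ}
    (f : Fin r → Matrix (Fin k) (Fin n ⊕ Fin n) ℝ)
    (g : Fin r → Matrix (Fin n ⊕ Fin n) (Fin k) ℝ) :
    ∑ i, Matrix.fromBlocks (0 : Matrix (Fin k) (Fin k) ℝ) (f i) (g i) 0 =
      Matrix.fromBlocks 0 (∑ i, f i) (∑ i, g i) 0 := by
  ext (i | i) (j | j) <;> simp [Matrix.sum_apply]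

theorem bracket_q_p_spans_p (k n : ℕ) (hk : 0 < k) (hn : 0 < n)
    (L : LieSubalgebra ℝ (Matrix (Fin k ⊕ (Fin n ⊕ Fin n)) (Fin k ⊕ (Fin n ⊕ Fin n)) ℝ))
    (h : ∃ (r : ℕ) (Ct : Fin r → Matrix (Fin n ⊕ Fin n) (Fin n ⊕ Fin n) ℝ),
      (∀ i, Matrix.fromBlocks 0 0 0 (Ct i) ∈ qSet k n L) ∧
      (∑ i, Ct i * Ct i) = 1) :
    (Submodule.span ℝ
        {Z | ∃ X ∈ qSet k n L, ∃ Y ∈ pSet k n L, Z = X * Y - Y * X} :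
      Set (Matrix (Fin k ⊕ (Fin n ⊕ Fin n)) (Fin k ⊕ (Fin n ⊕ Fin n)) ℝ)) =
      pSet k n L := by
  obtain ⟨r, Ct, hCt, hsum⟩ := h
  apply Set.Subset.antisymm
  · intro x hx
    refine Submodule.span_induction (p := fun x _ => x ∈ pSet k n L) ?_ ?_ ?_ ?_ hx
    · rintro z ⟨X, hX, Y, hY, rfl⟩
      exact aux_lie_mem_p k n L hX hY
    · exact ⟨L.zero_mem, 0, 0, by simp⟩
    · rintro a b - - ⟨haL, B₁, B₁', rfl⟩ ⟨hbL, B₂, B₂', rfl⟩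
      exact ⟨L.add_mem haL hbL, B₁ + B₂, B₁' + B₂', by
        ext (i | i) (j | j) <;> simp⟩
    · rintro c a - ⟨haL, B, B', rfl⟩
      exact ⟨L.smul_mem c haL, c • B, c • B', by
        ext (i | i) (j | j) <;> simp⟩
  · rintro y hy
    obtain ⟨hyL, B, B', rfl⟩ := hy
    set Y : Matrix (Fin k ⊕ (Fin n ⊕ Fin n)) (Fin k ⊕ (Fin n ⊕ Fin n)) ℝ :=
      Matrix.fromBlocks 0 B B' 0 with hYdef
    set X : Fin r → Matrix (Fin k ⊕ (Fin n ⊕ Fin n)) (Fin k ⊕ (Fin n ⊕ Fin n)) ℝ :=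
      fun i => Matrix.fromBlocks 0 0 0 (Ct i) with hXdef
    have hZp : ∀ i, X i * Y - Y * X i ∈ pSet k n L := fun i =>
      aux_lie_mem_p k n L (hCt i) ⟨hyL, B, B', rfl⟩
    have hterm : ∀ i, X i * (X i * Y - Y * X i) - (X i * Y - Y * X i) * X i =
        Matrix.fromBlocks 0 (B * (Ct i * Ct i)) ((Ct i * Ct i) * B') 0 := by
      intro i
      ext (a | a) (b | b) <;>
        simp [hXdef, hYdef, Matrix.fromBlocks_multiply, Matrix.sub_apply, Matrix.mul_sub,
          Matrix.sub_mul, Matrix.mul_assoc]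
    have hYeq : Y = ∑ i, (X i * (X i * Y - Y * X i) - (X i * Y - Y * X i) * X i) := by
      rw [Finset.sum_congr rfl fun i _ => hterm i, sum_fromBlocks_p,
        ← Matrix.mul_sum, ← Matrix.sum_mul, hsum, Matrix.mul_one, Matrix.one_mul]
    rw [hYeq]
    refine Submodule.sum_mem _ fun i _ => Submodule.subset_span ?_
    exact ⟨X i, hCt i, X i * Y - Y * X i, hZp i, rfl⟩
end

section
/- The bilinear form Ω̃ on W defined by Ω̃(X, Y) := Tr(ρ·(X·Y − Y·X)) is nondegenerate: if X ∈ W satisfies Ω̃(X, Y) = 0 for all Y ∈ W, then X = 0. -/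
open Matrix

/-- The subspace `W = 𝔤₋₁^σ ⊕ 𝔭` : matrices `[[0,B],[B',C]]` with `CJ + JC = 0`. -/
def Wset (k n : ℕ) : Set (Matrix (Fin k ⊕ (Fin n ⊕ Fin n)) (Fin k ⊕ (Fin n ⊕ Fin n)) ℝ) :=
  {X | ∃ (B : Matrix (Fin k) (Fin n ⊕ Fin n) ℝ) (B' : Matrix (Fin n ⊕ Fin n) (Fin k) ℝ)
    (C : Matrix (Fin n ⊕ Fin n) (Fin n ⊕ Fin n) ℝ),
    C * Jmat n + Jmat n * C = 0 ∧ X = Matrix.fromBlocks 0 B B' C}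

/-!
Since `Tr(ρ (XY - YX)) = Tr([ρ, X] Y)`, the form is the trace pairing of `[ρ, X]` with `Y`.
For `X = [[0, B], [B', C]] ∈ W` we have `[ρ, X] = [[0, -BJ], [JB', JC - CJ]]`, and its transpose
lies in `W` again because `Jᵀ = -J`. Taking `Y = [ρ, X]ᵀ` gives `Tr([ρ, X] [ρ, X]ᵀ) = 0`, so
`[ρ, X] = 0`. As `J` is invertible and `JC - CJ = 2JC`, this forces `B = B' = C = 0`.
-/

theorem Matrix.trace_mul_commutator {R m : Type*} [CommRing R] [Fintype m]
    (ρ X Y : Matrix m m R) :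
    trace (ρ * (X * Y - Y * X)) = trace ((ρ * X - X * ρ) * Y) := by
  rw [mul_sub, sub_mul, trace_sub, trace_sub, ← mul_assoc, ← mul_assoc, trace_mul_cycle ρ Y X]

theorem commutator_anticomm_of_anticomm {A : Type*} [Ring A] {j c : A} (hc : c * j + j * c = 0) :
    (j * c - c * j) * j + j * (j * c - c * j) = 0 := by
  calc (j * c - c * j) * j + j * (j * c - c * j) = j * (c * j + j * c) - (c * j + j * c) * j := by
        noncomm_ring
    _ = 0 := by rw [hc, mul_zero, zero_mul, sub_zero]

theorem Matrix.transpose_anticomm_of_anticomm {R m : Type*} [CommRing R] [Fintype m]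
    {J C : Matrix m m R} (hJ : Jᵀ = -J) (hC : C * J + J * C = 0) :
    Cᵀ * J + J * Cᵀ = 0 := by
  have h := congrArg transpose hC
  rwa [transpose_add, transpose_mul, transpose_mul, hJ, transpose_zero, neg_mul, mul_neg,
    ← neg_add, neg_eq_zero, add_comm] at h

theorem Jmat_transpose (n : ℕ) : (Jmat n)ᵀ = -Jmat n := by
  simp [Jmat, fromBlocks_transpose, fromBlocks_neg]

theorem Jmat_mul_eq_zero_iff {n : ℕ} {p : Type*} {A : Matrix (Fin n ⊕ Fin n) p ℝ} :
    Jmat n * A = 0 ↔ A = 0 := by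
  refine ⟨fun h => ?_, fun h => by rw [h, Matrix.mul_zero]⟩
  have h' : Jmat n * (Jmat n * A) = 0 := by rw [h, Matrix.mul_zero]
  rwa [← Matrix.mul_assoc, Jmat_mul_self, Matrix.neg_mul, Matrix.one_mul, neg_eq_zero] at h'

theorem mul_Jmat_eq_zero_iff {n : ℕ} {p : Type*} [Fintype p] {A : Matrix p (Fin n ⊕ Fin n) ℝ} :
    A * Jmat n = 0 ↔ A = 0 := by
  refine ⟨fun h => ?_, fun h => by rw [h, Matrix.zero_mul]⟩
  have h' : A * Jmat n * Jmat n = 0 := by rw [h, Matrix.zero_mul]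
  rwa [Matrix.mul_assoc, Jmat_mul_self, Matrix.mul_neg, Matrix.mul_one, neg_eq_zero] at h'

section

variable {k n : ℕ}

theorem rhoMat_commutator_fromBlocks (B : Matrix (Fin k) (Fin n ⊕ Fin n) ℝ)
    (B' : Matrix (Fin n ⊕ Fin n) (Fin k) ℝ) (C : Matrix (Fin n ⊕ Fin n) (Fin n ⊕ Fin n) ℝ) :
    rhoMat k n * fromBlocks 0 B B' C - fromBlocks 0 B B' C * rhoMat k n =
      fromBlocks 0 (-(B * Jmat n)) (Jmat n * B') (Jmat n * C - C * Jmat n) := by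
  simp [rhoMat, fromBlocks_multiply, sub_eq_add_neg, fromBlocks_neg, fromBlocks_add]

theorem transpose_rhoMat_commutator_mem_Wset {X : Matrix (Fin k ⊕ (Fin n ⊕ Fin n))
    (Fin k ⊕ (Fin n ⊕ Fin n)) ℝ} (hX : X ∈ Wset k n) :
    (rhoMat k n * X - X * rhoMat k n)ᵀ ∈ Wset k n := by
  obtain ⟨B, B', C, hC, rfl⟩ := hX
  rw [rhoMat_commutator_fromBlocks, fromBlocks_transpose, transpose_zero]
  exact ⟨_, _, _, transpose_anticomm_of_anticomm (Jmat_transpose n)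
    (commutator_anticomm_of_anticomm hC), rfl⟩

theorem eq_zero_of_rhoMat_commutator_eq_zero {X : Matrix (Fin k ⊕ (Fin n ⊕ Fin n))
    (Fin k ⊕ (Fin n ⊕ Fin n)) ℝ} (hX : X ∈ Wset k n)
    (h : rhoMat k n * X - X * rhoMat k n = 0) : X = 0 := by
  obtain ⟨B, B', C, hC, rfl⟩ := hX
  rw [rhoMat_commutator_fromBlocks, ← fromBlocks_zero, fromBlocks_inj] at h
  obtain ⟨-, hB, hB', hJC⟩ := h
  have h2JC : (2 : ℝ) • (Jmat n * C) = 0 :=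
    calc (2 : ℝ) • (Jmat n * C) = (Jmat n * C - C * Jmat n) + (C * Jmat n + Jmat n * C) := by
          module
      _ = 0 := by rw [hJC, hC, add_zero]
  rw [neg_eq_zero, mul_Jmat_eq_zero_iff] at hB
  rw [Jmat_mul_eq_zero_iff] at hB'
  rw [smul_eq_zero, or_iff_right two_ne_zero, Jmat_mul_eq_zero_iff] at h2JC
  rw [hB, hB', h2JC, fromBlocks_zero]

end

theorem omega_nondegenerate_general (k n : ℕ)
    (X : Matrix (Fin k ⊕ (Fin n ⊕ Fin n)) (Fin k ⊕ (Fin n ⊕ Fin n)) ℝ)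
    (hX : X ∈ Wset k n)
    (h : ∀ Y ∈ Wset k n, Matrix.trace (rhoMat k n * (X * Y - Y * X)) = 0) :
    X = 0 := by
  set D := rhoMat k n * X - X * rhoMat k n
  have hD : trace (D * Dᵀ) = 0 := by
    rw [← trace_mul_commutator]
    exact h _ (transpose_rhoMat_commutator_mem_Wset hX)
  rw [← conjTranspose_eq_transpose_of_trivial, trace_mul_conjTranspose_self_eq_zero_iff] at hD
  exact eq_zero_of_rhoMat_commutator_eq_zero hX hD

theorem omega_nondegenerate (k n : ℕ) (hk : 0 < k) (hn : 0 < n)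
    (X : Matrix (Fin k ⊕ (Fin n ⊕ Fin n)) (Fin k ⊕ (Fin n ⊕ Fin n)) ℝ)
    (hX : X ∈ Wset k n)
    (h : ∀ Y ∈ Wset k n, Matrix.trace (rhoMat k n * (X * Y - Y * X)) = 0) :
    X = 0 :=
  omega_nondegenerate_general k n X hX h
end

section
/- For each ε ∈ {1, −1} and all X, Y ∈ W one has Ω̃(Ĵ^ε X, Ĵ^ε Y) = Ω̃(X, Y), where Ω̃(X, Y) := Tr(ρ·(X·Y − Y·X)). (The natural almost complex structures are compatible with the 2-form ω.) -/
/-! On `W` the block `C` anticommutes with `J`, so `(JC - CJ)/2 = JC` and `Ĵ^ε` acts on the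
blocks as `B ↦ -BJ`, `B' ↦ JB'`, `C ↦ εJC`. As `ρ` only sees the lower right block of `XY - YX`,
`Ω̃` splits as `tr(J(B'D - D'B)) + tr(J(CE - EC))`. The first part is invariant by `J² = -1` and
cyclicity of the trace, the second because `J(JC)(JE) = J²(CJ)E = J(CE)` and `ε² = 1`. -/

open Matrix

/-- The map `Ĵ^ε : [[A,B],[B',C]] ↦ [[0, −B·J],[J·B', ε·(J·C − C·J)/2]]`. -/
noncomputable def Jhat (k n : ℕ) (ε : ℝ)
    (X : Matrix (Fin k ⊕ (Fin n ⊕ Fin n)) (Fin k ⊕ (Fin n ⊕ Fin n)) ℝ) :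
    Matrix (Fin k ⊕ (Fin n ⊕ Fin n)) (Fin k ⊕ (Fin n ⊕ Fin n)) ℝ :=
  Matrix.fromBlocks 0 (-(X.toBlocks₁₂ * Jmat n)) (Jmat n * X.toBlocks₂₁)
    ((ε / 2) • (Jmat n * X.toBlocks₂₂ - X.toBlocks₂₂ * Jmat n))

/-- The bilinear form `Ω̃(X,Y) = Tr(ρ·(XY − YX))`. -/
noncomputable def OmegaForm (k n : ℕ)
    (X Y : Matrix (Fin k ⊕ (Fin n ⊕ Fin n)) (Fin k ⊕ (Fin n ⊕ Fin n)) ℝ) : ℝ :=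
  Matrix.trace (rhoMat k n * (X * Y - Y * X))


namespace Matrix

variable {l m R : Type*}

theorem fromBlocks_sub [Sub R] (A A' : Matrix l l R) (B B' : Matrix l m R)
    (C C' : Matrix m l R) (D D' : Matrix m m R) :
    fromBlocks A B C D - fromBlocks A' B' C' D' =
      fromBlocks (A - A') (B - B') (C - C') (D - D') := by
  ext (_ | _) (_ | _) <;> rfl

variable [Fintype l] [Fintype m]

theorem trace_fromBlocks [AddCommMonoid R] (A : Matrix l l R) (B : Matrix l m R)
    (C : Matrix m l R) (D : Matrix m m R) :
    (fromBlocks A B C D).trace = A.trace + D.trace := by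
  simp [trace, Fintype.sum_sum_type]

theorem trace_mul_mul_neg_mul_of_mul_self_eq_neg_one [CommRing R] [DecidableEq m]
    {J : Matrix m m R} (hJ : J * J = -1) (P : Matrix m l R) (Q : Matrix l m R) :
    trace (J * (J * P * -(Q * J))) = trace (J * (P * Q)) := by
  calc trace (J * (J * P * -(Q * J))) = trace (-(J * J) * (P * Q) * J) := by
        simp only [Matrix.mul_neg, Matrix.neg_mul, Matrix.mul_assoc]
    _ = trace (J * (P * Q)) := by rw [hJ, neg_neg, Matrix.one_mul, trace_mul_comm]

end Matrix

theorem mul_mul_mul_of_mul_self_eq_neg_one_of_anticomm {A : Type*} [Ring A] {J C : A}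
    (hJ : J * J = -1) (hC : C * J = -(J * C)) (E : A) :
    J * (J * C * (J * E)) = J * (C * E) := by
  calc J * (J * C * (J * E)) = J * J * (C * J) * E := by noncomm_ring
    _ = J * (C * E) := by rw [hJ, hC]; noncomm_ring

theorem OmegaForm_fromBlocks (k n : ℕ) (B D : Matrix (Fin k) (Fin n ⊕ Fin n) ℝ)
    (B' D' : Matrix (Fin n ⊕ Fin n) (Fin k) ℝ)
    (C E : Matrix (Fin n ⊕ Fin n) (Fin n ⊕ Fin n) ℝ) :
    OmegaForm k n (fromBlocks 0 B B' C) (fromBlocks 0 D D' E) =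
      trace (Jmat n * (B' * D)) - trace (Jmat n * (D' * B))
        + (trace (Jmat n * (C * E)) - trace (Jmat n * (E * C))) := by
  simp only [OmegaForm, rhoMat, fromBlocks_multiply, fromBlocks_sub, trace_fromBlocks,
    Matrix.zero_mul, Matrix.mul_zero, zero_add, trace_zero, Matrix.mul_sub, Matrix.mul_add,
    trace_sub, trace_add]
  ring

theorem Jhat_fromBlocks_of_anticomm (k n : ℕ) (ε : ℝ)
    (B : Matrix (Fin k) (Fin n ⊕ Fin n) ℝ) (B' : Matrix (Fin n ⊕ Fin n) (Fin k) ℝ)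
    {C : Matrix (Fin n ⊕ Fin n) (Fin n ⊕ Fin n) ℝ}
    (hC : C * Jmat n = -(Jmat n * C)) :
    Jhat k n ε (fromBlocks 0 B B' C) =
      fromBlocks 0 (-(B * Jmat n)) (Jmat n * B') (ε • (Jmat n * C)) := by
  rw [Jhat, toBlocks_fromBlocks₁₂, toBlocks_fromBlocks₂₁, toBlocks_fromBlocks₂₂, hC,
    sub_neg_eq_add, ← two_smul ℝ, smul_smul, div_mul_cancel₀ ε two_ne_zero]

theorem omega_compatible_with_Jhat_general (k n : ℕ)
    (ε : ℝ) (hε : ε = 1 ∨ ε = -1)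
    (X Y : Matrix (Fin k ⊕ (Fin n ⊕ Fin n)) (Fin k ⊕ (Fin n ⊕ Fin n)) ℝ)
    (hX : X ∈ Wset k n) (hY : Y ∈ Wset k n) :
    OmegaForm k n (Jhat k n ε X) (Jhat k n ε Y) = OmegaForm k n X Y := by
  obtain ⟨B, B', C, hC, rfl⟩ := hX
  obtain ⟨D, D', E, hE, rfl⟩ := hY
  have hJ := Jmat_mul_self n
  have hCJ : C * Jmat n = -(Jmat n * C) := eq_neg_of_add_eq_zero_left hC
  have hEJ : E * Jmat n = -(Jmat n * E) := eq_neg_of_add_eq_zero_left hE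
  have hεε : ε * ε = 1 := by rcases hε with rfl | rfl <;> norm_num
  have hCE : Jmat n * (ε • (Jmat n * C) * ε • (Jmat n * E)) = Jmat n * (C * E) := by
    rw [smul_mul_smul_comm, hεε, one_smul, mul_mul_mul_of_mul_self_eq_neg_one_of_anticomm hJ hCJ]
  have hEC : Jmat n * (ε • (Jmat n * E) * ε • (Jmat n * C)) = Jmat n * (E * C) := by
    rw [smul_mul_smul_comm, hεε, one_smul, mul_mul_mul_of_mul_self_eq_neg_one_of_anticomm hJ hEJ]
  rw [Jhat_fromBlocks_of_anticomm k n ε B B' hCJ, Jhat_fromBlocks_of_anticomm k n ε D D' hEJ,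
    OmegaForm_fromBlocks, OmegaForm_fromBlocks, hCE, hEC,
    trace_mul_mul_neg_mul_of_mul_self_eq_neg_one hJ,
    trace_mul_mul_neg_mul_of_mul_self_eq_neg_one hJ]

theorem omega_compatible_with_Jhat (k n : ℕ) (hk : 0 < k) (hn : 0 < n)
    (ε : ℝ) (hε : ε = 1 ∨ ε = -1)
    (X Y : Matrix (Fin k ⊕ (Fin n ⊕ Fin n)) (Fin k ⊕ (Fin n ⊕ Fin n)) ℝ)
    (hX : X ∈ Wset k n) (hY : Y ∈ Wset k n) :
    OmegaForm k n (Jhat k n ε X) (Jhat k n ε Y) = OmegaForm k n X Y :=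
  omega_compatible_with_Jhat_general k n ε hε X Y hX hY
end

section
/- Let C₁, C₂ ∈ V := {C ∈ Mat(2n×2n,ℝ) : C·J + J·C = 0} and set D := J·(C₁·C₂ − C₂·C₁); then D·J = J·D, the map C ↦ D·C + C·D preserves V, and the trace of this endomorphism of V minus the trace of the endomorphism of Mat(k×2n,ℝ) × Mat(2n×k,ℝ) given by (B, B') ↦ (B·D, D·B') equals 2(n−k)·Tr(J·(C₁·C₂ − C₂·C₁)). (This is the trace identity showing that for sl(k+2n,ℝ) the almost complex structure j⁻ is special, with ChernRicci = 2(n−k)·ω.) -/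
open Matrix

/-- The subspace `V = {C : C·J + J·C = 0}` of `2n×2n` real matrices. -/
noncomputable def Vsub (n : ℕ) : Submodule ℝ (Matrix (Fin n ⊕ Fin n) (Fin n ⊕ Fin n) ℝ) where
  carrier := {C | C * Jmat n + Jmat n * C = 0}
  add_mem' := by
    intro a b ha hb
    simp only [Set.mem_setOf_eq] at *
    rw [add_mul, mul_add]
    calc a * Jmat n + b * Jmat n + (Jmat n * a + Jmat n * b)
        = (a * Jmat n + Jmat n * a) + (b * Jmat n + Jmat n * b) := by abel
      _ = 0 := by rw [ha, hb]; simp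
  zero_mem' := by simp
  smul_mem' := by
    intro c x hx
    simp only [Set.mem_setOf_eq] at *
    rw [Matrix.smul_mul, Matrix.mul_smul, ← smul_add, hx, smul_zero]

/-- Right multiplication by a fixed matrix, as a linear map on rectangular matrices. -/
noncomputable def rmulMap {m p : Type*} [Fintype p]
    (D : Matrix p p ℝ) : Matrix m p ℝ →ₗ[ℝ] Matrix m p ℝ where
  toFun B := B * D
  map_add' a b := by simp [Matrix.add_mul]
  map_smul' c a := by simp [Matrix.smul_mul]

/-- Left multiplication by a fixed matrix, as a linear map on rectangular matrices. -/
noncomputable def lmulMap {m p : Type*} [Fintype p]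
    (D : Matrix p p ℝ) : Matrix p m ℝ →ₗ[ℝ] Matrix p m ℝ where
  toFun B := D * B
  map_add' a b := by simp [Matrix.mul_add]
  map_smul' c a := by simp [Matrix.mul_smul]


section Aux

lemma mem_Vsub_iff {n : ℕ} {C : Matrix (Fin n ⊕ Fin n) (Fin n ⊕ Fin n) ℝ} :
    C ∈ Vsub n ↔ C * Jmat n + Jmat n * C = 0 := Iff.rfl

lemma anti_blocks {n : ℕ} (C : Matrix (Fin n ⊕ Fin n) (Fin n ⊕ Fin n) ℝ)
    (h : C * Jmat n + Jmat n * C = 0) :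
    C = fromBlocks C.toBlocks₁₁ C.toBlocks₁₂ C.toBlocks₁₂ (-C.toBlocks₁₁) := by
  have h2 : fromBlocks C.toBlocks₁₁ C.toBlocks₁₂ C.toBlocks₂₁ C.toBlocks₂₂ * Jmat n
      + Jmat n * fromBlocks C.toBlocks₁₁ C.toBlocks₁₂ C.toBlocks₂₁ C.toBlocks₂₂ = 0 := by
    rw [fromBlocks_toBlocks]; exact h
  rw [Jmat] at h2
  simp only [Matrix.fromBlocks_multiply, Matrix.fromBlocks_add, Matrix.mul_zero, Matrix.mul_one,
    Matrix.mul_neg, Matrix.zero_mul, Matrix.one_mul, Matrix.neg_mul, zero_add, add_zero] at h2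
  have e21 : C.toBlocks₂₂ + C.toBlocks₁₁ = 0 := congrArg Matrix.toBlocks₂₁ h2
  have e22 : -C.toBlocks₂₁ + C.toBlocks₁₂ = 0 := congrArg Matrix.toBlocks₂₂ h2
  have h21 : C.toBlocks₂₁ = C.toBlocks₁₂ := neg_add_eq_zero.mp e22
  have h22 : C.toBlocks₂₂ = -C.toBlocks₁₁ := eq_neg_of_add_eq_zero_left e21
  conv_lhs => rw [← fromBlocks_toBlocks C, h21, h22]

lemma comm_blocks {n : ℕ} (D : Matrix (Fin n ⊕ Fin n) (Fin n ⊕ Fin n) ℝ)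
    (h : D * Jmat n = Jmat n * D) :
    D = fromBlocks D.toBlocks₁₁ D.toBlocks₁₂ (-D.toBlocks₁₂) D.toBlocks₁₁ := by
  have h2 : fromBlocks D.toBlocks₁₁ D.toBlocks₁₂ D.toBlocks₂₁ D.toBlocks₂₂ * Jmat n
      = Jmat n * fromBlocks D.toBlocks₁₁ D.toBlocks₁₂ D.toBlocks₂₁ D.toBlocks₂₂ := by
    rw [fromBlocks_toBlocks]; exact h
  rw [Jmat] at h2
  simp only [Matrix.fromBlocks_multiply, Matrix.mul_zero, Matrix.mul_one,
    Matrix.mul_neg, Matrix.zero_mul, Matrix.one_mul, Matrix.neg_mul, zero_add, add_zero] at h2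
  have e21 : D.toBlocks₂₂ = D.toBlocks₁₁ := congrArg Matrix.toBlocks₂₁ h2
  have e22 : -D.toBlocks₂₁ = D.toBlocks₁₂ := congrArg Matrix.toBlocks₂₂ h2
  have h21 : D.toBlocks₂₁ = -D.toBlocks₁₂ := by rw [← e22, neg_neg]
  conv_lhs => rw [← fromBlocks_toBlocks D, h21, e21]

lemma blocks_mem_Vsub {n : ℕ} (A B : Matrix (Fin n) (Fin n) ℝ) :
    fromBlocks A B B (-A) ∈ Vsub n := by
  rw [mem_Vsub_iff, Jmat]
  simp only [Matrix.fromBlocks_multiply, Matrix.fromBlocks_add, Matrix.mul_zero, Matrix.mul_one,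
    Matrix.mul_neg, Matrix.zero_mul, Matrix.one_mul, Matrix.neg_mul, zero_add, add_zero]
  ext (i|i) (j|j) <;> simp [Matrix.fromBlocks]

/-- The linear equivalence `(A, B) ↦ [A B; B -A]` onto `Vsub n`. -/
noncomputable def eV (n : ℕ) :
    (Matrix (Fin n) (Fin n) ℝ × Matrix (Fin n) (Fin n) ℝ) ≃ₗ[ℝ] ↥(Vsub n) where
  toFun p := ⟨fromBlocks p.1 p.2 p.2 (-p.1), blocks_mem_Vsub p.1 p.2⟩
  map_add' := by
    rintro ⟨a1, a2⟩ ⟨b1, b2⟩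
    apply Subtype.ext
    show fromBlocks (a1 + b1) (a2 + b2) (a2 + b2) (-(a1 + b1))
      = fromBlocks a1 a2 a2 (-a1) + fromBlocks b1 b2 b2 (-b1)
    rw [neg_add]
    exact (Matrix.fromBlocks_add _ _ _ _ _ _ _ _).symm
  map_smul' := by
    rintro c ⟨a1, a2⟩
    apply Subtype.ext
    show fromBlocks (c • a1) (c • a2) (c • a2) (-(c • a1))
      = c • fromBlocks a1 a2 a2 (-a1)
    rw [← smul_neg]
    exact (Matrix.fromBlocks_smul _ _ _ _ _).symm
  invFun C := (Matrix.toBlocks₁₁ C.1, Matrix.toBlocks₁₂ C.1)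
  left_inv p := by
    show (Matrix.toBlocks₁₁ (fromBlocks p.1 p.2 p.2 (-p.1)),
      Matrix.toBlocks₁₂ (fromBlocks p.1 p.2 p.2 (-p.1))) = p
    simp
  right_inv C := by
    apply Subtype.ext
    exact (anti_blocks C.1 C.2).symm

lemma stdBasis_repr {m p : Type*} [Fintype m] [Fintype p] [DecidableEq m] [DecidableEq p]
    (M : Matrix p m ℝ) (a : p) (b : m) :
    (Matrix.stdBasis ℝ p m).repr M (a, b) = M a b := by
  simp [Matrix.stdBasis]

lemma trace_lmulMap {m p : Type*} [Fintype m] [Fintype p] [DecidableEq m] [DecidableEq p]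
    (D : Matrix p p ℝ) :
    LinearMap.trace ℝ (Matrix p m ℝ) (lmulMap D) = (Fintype.card m : ℝ) * D.trace := by
  rw [LinearMap.trace_eq_matrix_trace ℝ (Matrix.stdBasis ℝ p m), Matrix.trace]
  simp only [Matrix.diag_apply, LinearMap.toMatrix_apply, lmulMap,
    LinearMap.coe_mk, AddHom.coe_mk]
  have key : ∀ x : p × m, (Matrix.stdBasis ℝ p m).repr (D * (Matrix.stdBasis ℝ p m) x) x
      = D x.1 x.1 := by
    rintro ⟨i, j⟩
    rw [stdBasis_repr, Matrix.stdBasis_eq_single]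
    simp [Matrix.mul_apply, Matrix.single]
  rw [Fintype.sum_congr _ _ key, Fintype.sum_prod_type]
  simp [Matrix.trace, Finset.mul_sum, mul_comm]

lemma trace_rmulMap {m p : Type*} [Fintype m] [Fintype p] [DecidableEq m] [DecidableEq p]
    (D : Matrix p p ℝ) :
    LinearMap.trace ℝ (Matrix m p ℝ) (rmulMap D) = (Fintype.card m : ℝ) * D.trace := by
  rw [LinearMap.trace_eq_matrix_trace ℝ (Matrix.stdBasis ℝ m p), Matrix.trace]
  simp only [Matrix.diag_apply, LinearMap.toMatrix_apply, rmulMap,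
    LinearMap.coe_mk, AddHom.coe_mk]
  have key : ∀ x : m × p, (Matrix.stdBasis ℝ m p).repr ((Matrix.stdBasis ℝ m p) x * D) x
      = D x.2 x.2 := by
    rintro ⟨i, j⟩
    rw [stdBasis_repr, Matrix.stdBasis_eq_single]
    simp [Matrix.mul_apply, Matrix.single]
  rw [Fintype.sum_congr _ _ key, Fintype.sum_prod_type]
  simp [Matrix.trace, Finset.mul_sum, Finset.sum_comm, mul_comm]

lemma trace_inl_comp_snd {M : Type*} [AddCommGroup M] [Module ℝ M]
    [Module.Finite ℝ M] [Module.Free ℝ M] (f : M →ₗ[ℝ] M) :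
    LinearMap.trace ℝ (M × M)
      ((LinearMap.inl ℝ M M) ∘ₗ (f ∘ₗ (LinearMap.snd ℝ M M))) = 0 := by
  rw [← LinearMap.trace_comp_comm']
  have h0 : (f ∘ₗ LinearMap.snd ℝ M M) ∘ₗ LinearMap.inl ℝ M M = 0 := by
    ext x; simp
  rw [h0, map_zero]

lemma trace_inr_comp_fst {M : Type*} [AddCommGroup M] [Module ℝ M]
    [Module.Finite ℝ M] [Module.Free ℝ M] (f : M →ₗ[ℝ] M) :
    LinearMap.trace ℝ (M × M)
      ((LinearMap.inr ℝ M M) ∘ₗ (f ∘ₗ (LinearMap.fst ℝ M M))) = 0 := by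
  rw [← LinearMap.trace_comp_comm']
  have h0 : (f ∘ₗ LinearMap.fst ℝ M M) ∘ₗ LinearMap.inr ℝ M M = 0 := by
    ext x; simp
  rw [h0, map_zero]

lemma trace_fromBlocks' {l : Type*} [Fintype l] (A B C D : Matrix l l ℝ) :
    (Matrix.fromBlocks A B C D).trace = A.trace + D.trace := by
  simp [Matrix.trace, Fintype.sum_sum_type, Matrix.fromBlocks]

end Aux

theorem special_trace_identity_sl (k n : ℕ) (hk : 0 < k) (hn : 0 < n)
    (C₁ C₂ : Matrix (Fin n ⊕ Fin n) (Fin n ⊕ Fin n) ℝ)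
    (hC₁ : C₁ ∈ Vsub n) (hC₂ : C₂ ∈ Vsub n) :
    (Jmat n * (C₁ * C₂ - C₂ * C₁)) * Jmat n = Jmat n * (Jmat n * (C₁ * C₂ - C₂ * C₁)) ∧
    ∃ h : ∀ C ∈ Vsub n,
        (LinearMap.mulLeft ℝ (Jmat n * (C₁ * C₂ - C₂ * C₁)) +
          LinearMap.mulRight ℝ (Jmat n * (C₁ * C₂ - C₂ * C₁))) C ∈ Vsub n,
      LinearMap.trace ℝ ↥(Vsub n)
          ((LinearMap.mulLeft ℝ (Jmat n * (C₁ * C₂ - C₂ * C₁)) +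
            LinearMap.mulRight ℝ (Jmat n * (C₁ * C₂ - C₂ * C₁))).restrict h) -
        LinearMap.trace ℝ
          (Matrix (Fin k) (Fin n ⊕ Fin n) ℝ × Matrix (Fin n ⊕ Fin n) (Fin k) ℝ)
          (LinearMap.prodMap (rmulMap (Jmat n * (C₁ * C₂ - C₂ * C₁)))
            (lmulMap (Jmat n * (C₁ * C₂ - C₂ * C₁)))) =
      2 * ((n : ℝ) - k) * Matrix.trace (Jmat n * (C₁ * C₂ - C₂ * C₁)) := by
  set D := Jmat n * (C₁ * C₂ - C₂ * C₁) with hDdef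
  have hJC₁ : C₁ * Jmat n = -(Jmat n * C₁) := eq_neg_of_add_eq_zero_left hC₁
  have hJC₂ : C₂ * Jmat n = -(Jmat n * C₂) := eq_neg_of_add_eq_zero_left hC₂
  have hcomm : (C₁ * C₂ - C₂ * C₁) * Jmat n = Jmat n * (C₁ * C₂ - C₂ * C₁) := by
    have h12 : (C₁ * C₂) * Jmat n = Jmat n * (C₁ * C₂) := by
      rw [mul_assoc, hJC₂, mul_neg, ← mul_assoc, hJC₁, neg_mul, neg_neg, mul_assoc]
    have h21 : (C₂ * C₁) * Jmat n = Jmat n * (C₂ * C₁) := by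
      rw [mul_assoc, hJC₁, mul_neg, ← mul_assoc, hJC₂, neg_mul, neg_neg, mul_assoc]
    rw [sub_mul, mul_sub, h12, h21]
  have hDJ : D * Jmat n = Jmat n * D := by
    rw [hDdef, mul_assoc, hcomm]
  refine ⟨hDJ, ?_⟩
  have hinv : ∀ C ∈ Vsub n,
      (LinearMap.mulLeft ℝ D + LinearMap.mulRight ℝ D) C ∈ Vsub n := by
    intro C hC
    rw [mem_Vsub_iff]
    have hCJ : C * Jmat n = -(Jmat n * C) := eq_neg_of_add_eq_zero_left hC
    simp only [LinearMap.add_apply, LinearMap.mulLeft_apply, LinearMap.mulRight_apply]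
    have h1 : (D * C) * Jmat n = -(D * (Jmat n * C)) := by
      rw [mul_assoc, hCJ, mul_neg]
    have h2 : Jmat n * (D * C) = D * (Jmat n * C) := by
      rw [← mul_assoc, ← hDJ, mul_assoc]
    have h3 : (C * D) * Jmat n = -(Jmat n * (C * D)) := by
      rw [mul_assoc, hDJ, ← mul_assoc, hCJ, neg_mul, mul_assoc]
    rw [add_mul, mul_add, h1, h2, h3]
    abel
  refine ⟨hinv, ?_⟩
  set T := LinearMap.mulLeft ℝ D + LinearMap.mulRight ℝ D with hTdef
  set P := D.toBlocks₁₁ with hP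
  set Q := D.toBlocks₁₂ with hQ
  have hDblock : D = fromBlocks P Q (-Q) P := comm_blocks D hDJ
  set G : (Matrix (Fin n) (Fin n) ℝ × Matrix (Fin n) (Fin n) ℝ) →ₗ[ℝ]
      (Matrix (Fin n) (Fin n) ℝ × Matrix (Fin n) (Fin n) ℝ) :=
    LinearMap.prodMap (LinearMap.mulLeft ℝ P + LinearMap.mulRight ℝ P)
        (LinearMap.mulLeft ℝ P + LinearMap.mulRight ℝ P)
      + (LinearMap.inl ℝ _ _) ∘ₗ ((LinearMap.mulLeft ℝ Q - LinearMap.mulRight ℝ Q)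
          ∘ₗ (LinearMap.snd ℝ _ _))
      + (LinearMap.inr ℝ _ _) ∘ₗ ((LinearMap.mulRight ℝ Q - LinearMap.mulLeft ℝ Q)
          ∘ₗ (LinearMap.fst ℝ _ _)) with hG
  have hconj : (eV n).symm.conj (T.restrict hinv) = G := by
    apply LinearMap.ext
    rintro ⟨A, B⟩
    have lhs_eq : ((eV n).symm.conj (T.restrict hinv)) (A, B)
        = ((T (fromBlocks A B B (-A))).toBlocks₁₁,
           (T (fromBlocks A B B (-A))).toBlocks₁₂) := rfl
    rw [lhs_eq]
    have hT : T (fromBlocks A B B (-A))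
        = D * fromBlocks A B B (-A) + fromBlocks A B B (-A) * D := rfl
    rw [hT]
    conv_lhs => rw [hDblock]
    simp only [hG, Matrix.fromBlocks_multiply, Matrix.fromBlocks_add,
      Matrix.toBlocks_fromBlocks₁₁, Matrix.toBlocks_fromBlocks₁₂,
      LinearMap.add_apply, LinearMap.sub_apply, LinearMap.comp_apply,
      LinearMap.prodMap_apply, LinearMap.inl_apply, LinearMap.inr_apply,
      LinearMap.fst_apply, LinearMap.snd_apply, LinearMap.mulLeft_apply,
      LinearMap.mulRight_apply, Prod.map_apply, Prod.mk_add_mk,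
      mul_neg, neg_mul, Prod.mk.injEq]
    constructor <;> abel
  have htrV : LinearMap.trace ℝ ↥(Vsub n) (T.restrict hinv)
      = LinearMap.trace ℝ _ G := by
    rw [← hconj, LinearMap.trace_conj']
  have hmulLeft : ∀ R : Matrix (Fin n) (Fin n) ℝ,
      LinearMap.mulLeft ℝ R = lmulMap (m := Fin n) R := fun R => LinearMap.ext fun _ => rfl
  have hmulRight : ∀ R : Matrix (Fin n) (Fin n) ℝ,
      LinearMap.mulRight ℝ R = rmulMap (m := Fin n) R := fun R => LinearMap.ext fun _ => rfl
  have htrG : LinearMap.trace ℝ _ G = 4 * (n : ℝ) * P.trace := by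
    simp only [hG, map_add, LinearMap.trace_prodMap', trace_inl_comp_snd, trace_inr_comp_fst,
      hmulLeft, hmulRight, trace_lmulMap, trace_rmulMap, Fintype.card_fin]
    ring
  have htrD : D.trace = P.trace + P.trace := by
    conv_lhs => rw [hDblock]
    rw [trace_fromBlocks']
  have htrProd : LinearMap.trace ℝ
      (Matrix (Fin k) (Fin n ⊕ Fin n) ℝ × Matrix (Fin n ⊕ Fin n) (Fin k) ℝ)
      (LinearMap.prodMap (rmulMap D) (lmulMap D)) = 2 * (k : ℝ) * D.trace := by
    rw [LinearMap.trace_prodMap', trace_rmulMap, trace_lmulMap, Fintype.card_fin]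
    ring
  rw [htrV, htrG, htrProd, htrD]
  ring
end
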